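/- Fix τ ∈ (0,1), Δ_τ, μ_τ, L_τ, σ_x > 0. Let x be a random vector in ℝ^d with E[x xᵀ] = I_d, ‖x‖ σ_x-sub-exponential, and let F_x : ℝ → [0,1] be a (measurable-in-x) family of CDFs with F_x(0) = τ and F_x(t) − F_x(t′) ≥ μ_τ(t − t′) for all −Δ_τ ≤ t′ ≤ t ≤ Δ_τ. Define ∇f_τ(θ) = E[(F_x(xᵀθ − xᵀθ*) − τ)·x]. Then for all θ′, θ″ with ‖θ′−θ*‖ ≤ Δ_τ/Δ_x and ‖θ″−θ*‖ ≤ Δ_τ/Δ_x, where Δ_x = σ_x·ln(8E[‖x‖⁴]): ⟨θ′ − θ″, ∇f_τ(θ′) − ∇f_τ(θ″)⟩ ≥ (μ_τ/2)·‖θ′ − θ″‖². -/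

import Mathlib

/-!
Put `u = θ' - θ''`. On the event `‖x‖ ≤ Δ_x` both `xᵀθ' - xᵀθ*` and `xᵀθ'' - xᵀθ*` lie in
`[-Δ_τ, Δ_τ]`, where `F_x` is `μ_τ`-strongly monotone; off that event monotonicity of `F_x` still
makes the integrand of `⟨u, ∇f_τ(θ') - ∇f_τ(θ'')⟩` nonnegative. So the gradient gap dominates
`μ_τ E[⟨u, x⟩² 1{‖x‖ ≤ Δ_x}]`. By isotropy `E⟨u, x⟩² = ‖u‖²`, while the tail part is at most
`‖u‖² E[‖x‖² 1{‖x‖ > Δ_x}] ≤ ‖u‖² (c / (4c) + c P(‖x‖ > Δ_x)) ≤ ‖u‖² / 2`, using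
`‖x‖² ≤ ‖x‖⁴ / (4c) + c` with `c = E‖x‖⁴ ≥ 1` and `P(‖x‖ > Δ_x) ≤ 2 e^{-Δ_x/σ_x} = 1 / (4c)`.
-/

open Real MeasureTheory RealInnerProductSpace

lemma mul_sq_le_sub_mul_sub_of_strongMono {G : ℝ → ℝ} {m Δ a b : ℝ}
    (hG : ∀ t' t : ℝ, -Δ ≤ t' → t' ≤ t → t ≤ Δ → m * (t - t') ≤ G t - G t')
    (ha : |a| ≤ Δ) (hb : |b| ≤ Δ) : m * (a - b) ^ 2 ≤ (G a - G b) * (a - b) := by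
  rw [abs_le] at ha hb
  rcases le_total b a with hba | hab
  · nlinarith [hG b a hb.1 hba ha.2]
  · nlinarith [hG a b ha.1 hab hb.2]

lemma real_inner_sq_le_norm_sq_mul_norm_sq {E : Type*} [NormedAddCommGroup E]
    [InnerProductSpace ℝ E] (u v : E) : ⟪u, v⟫ ^ 2 ≤ ‖u‖ ^ 2 * ‖v‖ ^ 2 := by
  rw [← mul_pow, ← sq_abs]
  exact pow_le_pow_left₀ (abs_nonneg _) (abs_real_inner_le_norm u v) 2

section

variable {Ω : Type*} [MeasurableSpace Ω] {μ : Measure Ω}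

lemma setIntegral_le_integral_sq_div_add [IsFiniteMeasure μ] {g : Ω → ℝ}
    (hg : Integrable g μ) (hg2 : Integrable (fun ω => g ω ^ 2) μ) (s : Set Ω) {c : ℝ} (hc : 0 < c) :
    ∫ ω in s, g ω ∂μ ≤ (∫ ω, g ω ^ 2 ∂μ) / (4 * c) + c * μ.real s := by
  have hamgm : ∀ ω, g ω ≤ g ω ^ 2 / (4 * c) + c := fun ω => by
    rw [div_add' _ _ _ (by positivity), le_div_iff₀ (by positivity)]
    nlinarith [sq_nonneg (g ω - 2 * c)]
  have hg2s : ∫ ω in s, g ω ^ 2 ∂μ ≤ ∫ ω, g ω ^ 2 ∂μ :=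
    setIntegral_le_integral hg2 (Filter.Eventually.of_forall fun ω => sq_nonneg (g ω))
  calc ∫ ω in s, g ω ∂μ ≤ ∫ ω in s, (g ω ^ 2 / (4 * c) + c) ∂μ :=
        setIntegral_mono hg.integrableOn ((hg2.div_const _).add (integrable_const c)).integrableOn
          hamgm
    _ = (∫ ω in s, g ω ^ 2 ∂μ) / (4 * c) + c * μ.real s := by
        rw [integral_add (hg2.div_const _).integrableOn (integrable_const c).integrableOn,
          integral_div, setIntegral_const, smul_eq_mul]
        ring
    _ ≤ (∫ ω, g ω ^ 2 ∂μ) / (4 * c) + c * μ.real s := by gcongr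

variable {E : Type*} [NormedAddCommGroup E] [InnerProductSpace ℝ E] {x : Ω → E}

lemma integrable_inner_sq (hx : AEStronglyMeasurable x μ)
    (hx2 : Integrable (fun ω => ‖x ω‖ ^ 2) μ) (u : E) :
    Integrable (fun ω => ⟪u, x ω⟫ ^ 2) μ := by
  refine (hx2.const_mul (‖u‖ ^ 2)).mono' ((hx.const_inner (c := u)).pow 2) ?_
  filter_upwards with ω
  rw [Real.norm_eq_abs, abs_of_nonneg (sq_nonneg _)]
  exact real_inner_sq_le_norm_sq_mul_norm_sq u (x ω)

lemma integral_inner_sq_eq_norm_sq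
    (hiso : ∀ u v : E, ∫ ω, ⟪x ω, u⟫ * ⟪x ω, v⟫ ∂μ = ⟪u, v⟫) (u : E) :
    ∫ ω, ⟪u, x ω⟫ ^ 2 ∂μ = ‖u‖ ^ 2 := by
  rw [← real_inner_self_eq_norm_sq, ← hiso]
  congr 1 with ω
  rw [sq, real_inner_comm]

lemma one_le_integral_norm_sq (hx : AEStronglyMeasurable x μ)
    (hiso : ∀ u v : E, ∫ ω, ⟪x ω, u⟫ * ⟪x ω, v⟫ ∂μ = ⟪u, v⟫)
    (hx2 : Integrable (fun ω => ‖x ω‖ ^ 2) μ) {u : E} (hu : u ≠ 0) :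
    1 ≤ ∫ ω, ‖x ω‖ ^ 2 ∂μ := by
  have hu2 : 0 < ‖u‖ ^ 2 := by positivity
  have : ‖u‖ ^ 2 ≤ ‖u‖ ^ 2 * ∫ ω, ‖x ω‖ ^ 2 ∂μ :=
    calc ‖u‖ ^ 2 = ∫ ω, ⟪u, x ω⟫ ^ 2 ∂μ := (integral_inner_sq_eq_norm_sq hiso u).symm
      _ ≤ ∫ ω, ‖u‖ ^ 2 * ‖x ω‖ ^ 2 ∂μ :=
          integral_mono (integrable_inner_sq hx hx2 u) (hx2.const_mul _)
            fun ω => real_inner_sq_le_norm_sq_mul_norm_sq u (x ω)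
      _ = ‖u‖ ^ 2 * ∫ ω, ‖x ω‖ ^ 2 ∂μ := integral_const_mul _ _
  nlinarith

lemma one_le_integral_norm_pow_four [IsProbabilityMeasure μ] (hx : AEStronglyMeasurable x μ)
    (hiso : ∀ u v : E, ∫ ω, ⟪x ω, u⟫ * ⟪x ω, v⟫ ∂μ = ⟪u, v⟫)
    (hx4 : Integrable (fun ω => ‖x ω‖ ^ 4) μ) {u : E} (hu : u ≠ 0) :
    1 ≤ ∫ ω, ‖x ω‖ ^ 4 ∂μ := by
  have hx2 := integrable_norm_pow_of_le hx (by norm_num : 2 ≤ 4) hx4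
  have : ∫ ω, ‖x ω‖ ^ 2 ∂μ ≤ ∫ ω, (1 + ‖x ω‖ ^ 4) / 2 ∂μ :=
    integral_mono hx2 (((integrable_const 1).add hx4).div_const 2) fun ω => by
      nlinarith [sq_nonneg (‖x ω‖ ^ 2 - 1)]
  rw [integral_div, integral_add (integrable_const 1) hx4, integral_const, probReal_univ,
    one_smul] at this
  linarith [one_le_integral_norm_sq hx hiso hx2 hu]

lemma half_norm_sq_le_setIntegral_inner_sq [IsProbabilityMeasure μ] (hx : StronglyMeasurable x)
    (hiso : ∀ u v : E, ∫ ω, ⟪x ω, u⟫ * ⟪x ω, v⟫ ∂μ = ⟪u, v⟫)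
    (hx4 : Integrable (fun ω => ‖x ω‖ ^ 4) μ) {Δ : ℝ}
    (htail : μ.real {ω | Δ < ‖x ω‖} ≤ 1 / (4 * ∫ ω, ‖x ω‖ ^ 4 ∂μ)) (u : E) :
    ‖u‖ ^ 2 / 2 ≤ ∫ ω in {ω | ‖x ω‖ ≤ Δ}, ⟪u, x ω⟫ ^ 2 ∂μ := by
  rcases eq_or_ne u 0 with rfl | hu
  · simp
  set c := ∫ ω, ‖x ω‖ ^ 4 ∂μ
  have hc : 1 ≤ c := one_le_integral_norm_pow_four hx.aestronglyMeasurable hiso hx4 hu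
  set A := {ω | ‖x ω‖ ≤ Δ}
  have hA : MeasurableSet A := measurableSet_le hx.norm.measurable measurable_const
  have hAc : Aᶜ = {ω | Δ < ‖x ω‖} := by ext; simp [A]
  have hx2 := integrable_norm_pow_of_le hx.aestronglyMeasurable (by norm_num : 2 ≤ 4) hx4
  have hx2x2 : Integrable (fun ω => (‖x ω‖ ^ 2) ^ 2) μ := by simpa only [← pow_mul] using hx4
  have hx2_tail : ∫ ω in Aᶜ, ‖x ω‖ ^ 2 ∂μ ≤ 1 / 2 :=
    calc ∫ ω in Aᶜ, ‖x ω‖ ^ 2 ∂μ ≤ (∫ ω, (‖x ω‖ ^ 2) ^ 2 ∂μ) / (4 * c) + c * μ.real Aᶜ :=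
          setIntegral_le_integral_sq_div_add hx2 hx2x2 Aᶜ (by positivity)
      _ ≤ c / (4 * c) + c * (1 / (4 * c)) := by
          simp only [← pow_mul, hAc]
          gcongr
      _ = 1 / 2 := by field_simp; norm_num
  have hinner_tail : ∫ ω in Aᶜ, ⟪u, x ω⟫ ^ 2 ∂μ ≤ ‖u‖ ^ 2 / 2 :=
    calc ∫ ω in Aᶜ, ⟪u, x ω⟫ ^ 2 ∂μ ≤ ∫ ω in Aᶜ, ‖u‖ ^ 2 * ‖x ω‖ ^ 2 ∂μ :=
          setIntegral_mono (integrable_inner_sq hx.aestronglyMeasurable hx2 u).integrableOn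
            (hx2.const_mul _).integrableOn fun ω => real_inner_sq_le_norm_sq_mul_norm_sq u (x ω)
      _ = ‖u‖ ^ 2 * ∫ ω in Aᶜ, ‖x ω‖ ^ 2 ∂μ := integral_const_mul _ _
      _ ≤ ‖u‖ ^ 2 * (1 / 2) := by gcongr
      _ = ‖u‖ ^ 2 / 2 := by ring
  have hsplit := integral_add_compl hA (integrable_inner_sq hx.aestronglyMeasurable hx2 u)
  rw [integral_inner_sq_eq_norm_sq hiso u] at hsplit
  linarith

lemma integrable_smul_of_abs_le {g : Ω → ℝ} {C : ℝ} (hx : Integrable x μ)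
    (hgx : AEStronglyMeasurable (fun ω => g ω • x ω) μ) (hg : ∀ ω, |g ω| ≤ C) :
    Integrable (fun ω => g ω • x ω) μ := by
  refine (hx.norm.const_mul C).mono' hgx (Filter.Eventually.of_forall fun ω => ?_)
  rw [norm_smul, Real.norm_eq_abs]
  exact mul_le_mul_of_nonneg_right (hg ω) (norm_nonneg _)

lemma abs_inner_sub_inner_le {v θ θs : E} {Δx Δτ : ℝ} (hΔx : 0 < Δx) (hv : ‖v‖ ≤ Δx)
    (hθ : ‖θ - θs‖ ≤ Δτ / Δx) : |⟪v, θ⟫ - ⟪v, θs⟫| ≤ Δτ :=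
  calc |⟪v, θ⟫ - ⟪v, θs⟫| = |⟪v, θ - θs⟫| := by rw [inner_sub_right]
    _ ≤ ‖v‖ * ‖θ - θs‖ := abs_real_inner_le_norm _ _
    _ ≤ Δx * (Δτ / Δx) := by gcongr
    _ = Δτ := mul_div_cancel₀ _ hΔx.ne'

/-- The paper's `∇f_τ(θ)`. -/
noncomputable def quantileGradient (μ : Measure Ω) (x : Ω → E) (F : E → ℝ → ℝ) (τ : ℝ)
    (θs θ : E) : E :=
  ∫ ω, (F (x ω) (⟪x ω, θ⟫ - ⟪x ω, θs⟫) - τ) • x ω ∂μ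

lemma mul_setIntegral_inner_sq_le_inner_quantileGradient_sub [CompleteSpace E]
    (hx : StronglyMeasurable x) (hx1 : Integrable x μ) (hx2 : Integrable (fun ω => ‖x ω‖ ^ 2) μ)
    {F : E → ℝ → ℝ} {τ Δτ m Δx : ℝ} {θs : E}
    (hF01 : ∀ v t, F v t ∈ Set.Icc (0 : ℝ) 1) (hFmono : ∀ v, Monotone (F v))
    (hFsm : ∀ v, ∀ t' t : ℝ, -Δτ ≤ t' → t' ≤ t → t ≤ Δτ → m * (t - t') ≤ F v t - F v t')
    (hmeasF : ∀ θ : E,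
      AEStronglyMeasurable (fun ω => (F (x ω) (⟪x ω, θ⟫ - ⟪x ω, θs⟫) - τ) • x ω) μ)
    (hΔx : 0 < Δx) {θ' θ'' : E} (h1 : ‖θ' - θs‖ ≤ Δτ / Δx) (h2 : ‖θ'' - θs‖ ≤ Δτ / Δx) :
    m * ∫ ω in {ω | ‖x ω‖ ≤ Δx}, ⟪θ' - θ'', x ω⟫ ^ 2 ∂μ ≤
      ⟪θ' - θ'', quantileGradient μ x F τ θs θ' - quantileGradient μ x F τ θs θ''⟫ := by
  set A := {ω | ‖x ω‖ ≤ Δx}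
  have hA : MeasurableSet A := measurableSet_le hx.norm.measurable measurable_const
  have hF_sub : ∀ v t, |F v t - τ| ≤ 1 + |τ| := fun v t => by
    have := hF01 v t
    rw [abs_le]
    constructor <;> linarith [this.1, this.2, le_abs_self τ, neg_abs_le τ]
  have hint : ∀ θ, Integrable (fun ω => (F (x ω) (⟪x ω, θ⟫ - ⟪x ω, θs⟫) - τ) • x ω) μ :=
    fun θ => integrable_smul_of_abs_le hx1 (hmeasF θ) fun ω => hF_sub _ _
  have hpointwise : ∀ ω, A.indicator (fun ω => m * ⟪θ' - θ'', x ω⟫ ^ 2) ω ≤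
      ⟪θ' - θ'', (F (x ω) (⟪x ω, θ'⟫ - ⟪x ω, θs⟫) - τ) • x ω -
        (F (x ω) (⟪x ω, θ''⟫ - ⟪x ω, θs⟫) - τ) • x ω⟫ := fun ω => by
    set a := ⟪x ω, θ'⟫ - ⟪x ω, θs⟫
    set b := ⟪x ω, θ''⟫ - ⟪x ω, θs⟫
    have hab : ⟪θ' - θ'', x ω⟫ = a - b := by
      rw [real_inner_comm, inner_sub_right]; ring
    have hrhs : ⟪θ' - θ'', (F (x ω) a - τ) • x ω - (F (x ω) b - τ) • x ω⟫ =
        (F (x ω) a - F (x ω) b) * (a - b) := by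
      rw [inner_sub_right, real_inner_smul_right, real_inner_smul_right, hab]; ring
    rw [hrhs]
    by_cases hω : ω ∈ A
    · rw [Set.indicator_of_mem hω, hab]
      exact mul_sq_le_sub_mul_sub_of_strongMono (hFsm (x ω))
        (abs_inner_sub_inner_le hΔx hω h1) (abs_inner_sub_inner_le hΔx hω h2)
    · rw [Set.indicator_of_notMem hω]
      exact ((hFmono (x ω)).monovary monotone_id).sub_mul_sub_nonneg b a
  calc m * ∫ ω in A, ⟪θ' - θ'', x ω⟫ ^ 2 ∂μ
      = ∫ ω, A.indicator (fun ω => m * ⟪θ' - θ'', x ω⟫ ^ 2) ω ∂μ := by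
        rw [integral_indicator hA, integral_const_mul]
    _ ≤ ∫ ω, ⟪θ' - θ'', (F (x ω) (⟪x ω, θ'⟫ - ⟪x ω, θs⟫) - τ) • x ω -
          (F (x ω) (⟪x ω, θ''⟫ - ⟪x ω, θs⟫) - τ) • x ω⟫ ∂μ :=
        integral_mono
          (((integrable_inner_sq hx.aestronglyMeasurable hx2 _).const_mul m).indicator hA)
          (((hint θ').sub (hint θ'')).const_inner _) hpointwise
    _ = _ := by
        rw [quantileGradient, quantileGradient, ← integral_sub (hint θ') (hint θ'')]
        exact integral_inner ((hint θ').sub (hint θ'')) _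

end

theorem stmt_16_general {Ω : Type*} [MeasurableSpace Ω] (μ : Measure Ω) [IsProbabilityMeasure μ]
    (d : ℕ) (x : Ω → EuclideanSpace ℝ (Fin d)) (θs : EuclideanSpace ℝ (Fin d))
    (F : EuclideanSpace ℝ (Fin d) → ℝ → ℝ)
    (τ Δτ μτ σx : ℝ)
    (hμτ : 0 < μτ) (hσx : 0 < σx)
    (hmx : Measurable x)
    (hiso : ∀ u v : EuclideanSpace ℝ (Fin d), ∫ ω, ⟪x ω, u⟫ * ⟪x ω, v⟫ ∂μ = ⟪u, v⟫)
    (htail : ∀ t : ℝ, 0 ≤ t → μ {ω | t < ‖x ω‖} ≤ ENNReal.ofReal (2 * Real.exp (-t / σx)))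
    (hint4 : Integrable (fun ω => ‖x ω‖ ^ 4) μ)
    (hF01 : ∀ v t, F v t ∈ Set.Icc (0 : ℝ) 1)
    (hFmono : ∀ v, Monotone (F v))
    (hFsm : ∀ v, ∀ t' t : ℝ, -Δτ ≤ t' → t' ≤ t → t ≤ Δτ → μτ * (t - t') ≤ F v t - F v t')
    (hmeasF : ∀ θ : EuclideanSpace ℝ (Fin d),
      AEStronglyMeasurable (fun ω => (F (x ω) (⟪x ω, θ⟫ - ⟪x ω, θs⟫) - τ) • x ω) μ)
    (θ' θ'' : EuclideanSpace ℝ (Fin d))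
    (h1 : ‖θ' - θs‖ ≤ Δτ / (σx * Real.log (8 * ∫ ω, ‖x ω‖ ^ 4 ∂μ)))
    (h2 : ‖θ'' - θs‖ ≤ Δτ / (σx * Real.log (8 * ∫ ω, ‖x ω‖ ^ 4 ∂μ))) :
    μτ / 2 * ‖θ' - θ''‖ ^ 2 ≤
      ⟪θ' - θ'', (∫ ω, (F (x ω) (⟪x ω, θ'⟫ - ⟪x ω, θs⟫) - τ) • x ω ∂μ) -
        ∫ ω, (F (x ω) (⟪x ω, θ''⟫ - ⟪x ω, θs⟫) - τ) • x ω ∂μ⟫ := by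
  by_cases hu : θ' - θ'' = 0
  · simp [hu]
  have hx := hmx.stronglyMeasurable
  have hx1 : Integrable x μ := (integrable_norm_iff hx.aestronglyMeasurable).1 <| by
    simpa using integrable_norm_pow_of_le hx.aestronglyMeasurable (by norm_num : 1 ≤ 4) hint4
  have hx2 := integrable_norm_pow_of_le hx.aestronglyMeasurable (by norm_num : 2 ≤ 4) hint4
  set c := ∫ ω, ‖x ω‖ ^ 4 ∂μ
  have hc : 1 ≤ c := one_le_integral_norm_pow_four hx.aestronglyMeasurable hiso hint4 hu
  have hΔx : 0 < σx * log (8 * c) := mul_pos hσx (log_pos (by linarith))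
  have htail_Δx : μ.real {ω | σx * log (8 * c) < ‖x ω‖} ≤ 1 / (4 * c) := by
    have hexp : 2 * exp (-(σx * log (8 * c)) / σx) = 1 / (4 * c) := by
      rw [neg_div, mul_div_cancel_left₀ _ hσx.ne', exp_neg, exp_log (by positivity)]
      field_simp
      norm_num
    have h := htail _ hΔx.le
    rw [hexp] at h
    exact ENNReal.toReal_le_of_le_ofReal (by positivity) h
  calc μτ / 2 * ‖θ' - θ''‖ ^ 2 = μτ * (‖θ' - θ''‖ ^ 2 / 2) := by ring
    _ ≤ μτ * ∫ ω in {ω | ‖x ω‖ ≤ σx * log (8 * c)}, ⟪θ' - θ'', x ω⟫ ^ 2 ∂μ := by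
        gcongr
        exact half_norm_sq_le_setIntegral_inner_sq hx hiso hint4 htail_Δx _
    _ ≤ _ := mul_setIntegral_inner_sq_le_inner_quantileGradient_sub hx hx1 hx2 hF01 hFmono hFsm
        hmeasF hΔx h1 h2

theorem stmt_16 {Ω : Type*} [MeasurableSpace Ω] (μ : Measure Ω) [IsProbabilityMeasure μ]
    (d : ℕ) (x : Ω → EuclideanSpace ℝ (Fin d)) (θs : EuclideanSpace ℝ (Fin d))
    (F : EuclideanSpace ℝ (Fin d) → ℝ → ℝ)
    (τ Δτ μτ Lτ σx : ℝ)
    (hτ1 : 0 < τ) (hτ2 : τ < 1) (hΔτ : 0 < Δτ) (hμτ : 0 < μτ) (hLτ : 0 < Lτ) (hσx : 0 < σx)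
    (hmx : Measurable x)
    (hiso : ∀ u v : EuclideanSpace ℝ (Fin d), ∫ ω, ⟪x ω, u⟫ * ⟪x ω, v⟫ ∂μ = ⟪u, v⟫)
    (htail : ∀ t : ℝ, 0 ≤ t → μ {ω | t < ‖x ω‖} ≤ ENNReal.ofReal (2 * Real.exp (-t / σx)))
    (hint4 : Integrable (fun ω => ‖x ω‖ ^ 4) μ)
    (hF01 : ∀ v t, F v t ∈ Set.Icc (0 : ℝ) 1)
    (hFmono : ∀ v, Monotone (F v))
    (hF0 : ∀ v, F v 0 = τ)
    (hFsm : ∀ v, ∀ t' t : ℝ, -Δτ ≤ t' → t' ≤ t → t ≤ Δτ → μτ * (t - t') ≤ F v t - F v t')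
    (hmeasF : ∀ θ : EuclideanSpace ℝ (Fin d),
      AEStronglyMeasurable (fun ω => (F (x ω) (⟪x ω, θ⟫ - ⟪x ω, θs⟫) - τ) • x ω) μ)
    (θ' θ'' : EuclideanSpace ℝ (Fin d))
    (h1 : ‖θ' - θs‖ ≤ Δτ / (σx * Real.log (8 * ∫ ω, ‖x ω‖ ^ 4 ∂μ)))
    (h2 : ‖θ'' - θs‖ ≤ Δτ / (σx * Real.log (8 * ∫ ω, ‖x ω‖ ^ 4 ∂μ))) :
    μτ / 2 * ‖θ' - θ''‖ ^ 2 ≤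
      ⟪θ' - θ'', (∫ ω, (F (x ω) (⟪x ω, θ'⟫ - ⟪x ω, θs⟫) - τ) • x ω ∂μ) -
        ∫ ω, (F (x ω) (⟪x ω, θ''⟫ - ⟪x ω, θs⟫) - τ) • x ω ∂μ⟫ :=
  stmt_16_general μ d x θs F τ Δτ μτ σx hμτ hσx hmx hiso htail hint4 hF01 hFmono hFsm hmeasF θ' θ''
    h1 h2
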